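/- arXiv:2204.02910 — 5 statements merged into one kernel-verified Lean document; each statement's English description precedes it below -/
import Mathlib

section
/- Each cluster of n-permutations contains exactly one pair of twins. That is, for every permutation σ of [n-1], among the n permutations x of [n] with reduce(x_1⋯x_{n-1}) = σ, there is exactly one unordered pair {π, τ} of distinct permutations with |π_1 − π_n| = |τ_1 − τ_n| = 1. -/
/-- `reduce w` replaces each copy of the i-th smallest value of `w` by `i`. -/
def reduce {m : ℕ} (w : Fin m → ℕ) : Fin m → ℕ :=
  fun i => ((Finset.univ.image w).filter (fun v => v ≤ w i)).card

/-- The first `n-1` letters of a word of length `n`. -/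
def firstw {n : ℕ} (w : Fin n → ℕ) : Fin (n - 1) → ℕ :=
  fun i => w (Fin.castLE (Nat.sub_le n 1) i)

/-- The last `n-1` letters of a word of length `n`. -/
def lastw {n : ℕ} (w : Fin n → ℕ) : Fin (n - 1) → ℕ :=
  fun i => w ⟨i.val + 1, by have := i.isLt; omega⟩

/-- The word (with letters in `{1,…,n}`) associated with a permutation of `[n]`. -/
def permWord {n : ℕ} (x : Equiv.Perm (Fin n)) : Fin n → ℕ := fun i => (x i : ℕ) + 1

/-- The word of a permutation of `[n-1]` indexing a cluster. -/
def clusterWord {n : ℕ} (σ : Equiv.Perm (Fin (n - 1))) : Fin (n - 1) → ℕ :=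
  fun i => (σ i : ℕ) + 1

/-- `x` is an edge of the cluster graph from `σ` to `τ`:
`reduce(x₁⋯x_{n-1}) = σ` and `reduce(x₂⋯x_n) = τ`. -/
def isEdge {n : ℕ} (x : Equiv.Perm (Fin n)) (σ τ : Equiv.Perm (Fin (n - 1))) : Prop :=
  reduce (firstw (permWord x)) = clusterWord σ ∧ reduce (lastw (permWord x)) = clusterWord τ

/-!
A member `x` of the cluster of `σ` is determined by its last value `k`: its other values avoid `k`
and are order-isomorphic to `σ`, so `x (castSucc i) = k.succAbove (σ i)`. Hence
`x₁ = k.succAbove (σ 0)`, which is adjacent to `k` exactly when `k` is `castSucc (σ 0)` or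
`succ (σ 0)`. So the cluster contains exactly two twins.
-/

open Finset Function

theorem Sym2.existsUnique_pair_of_forall_iff {α : Type*} {P Q : α → Prop} {u v : α}
    (huv : u ≠ v) (h : ∀ x, P x ∧ Q x ↔ x = u ∨ x = v) :
    ∃! p : Sym2 α, ∃ x y, p = s(x, y) ∧ x ≠ y ∧ P x ∧ P y ∧ Q x ∧ Q y := by
  obtain ⟨hPu, hQu⟩ := (h u).2 (Or.inl rfl)
  obtain ⟨hPv, hQv⟩ := (h v).2 (Or.inr rfl)
  refine ⟨s(u, v), ⟨u, v, rfl, huv, hPu, hPv, hQu, hQv⟩, ?_⟩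
  rintro p ⟨x, y, rfl, hxy, hPx, hPy, hQx, hQy⟩
  rcases (h x).1 ⟨hPx, hQx⟩ with rfl | rfl <;> rcases (h y).1 ⟨hPy, hQy⟩ with rfl | rfl
  exacts [absurd rfl hxy, rfl, Sym2.eq_swap, absurd rfl hxy]

namespace Fin

theorem card_filter_apply_le_of_injective {M : ℕ} {f : Fin M → Fin M} (hf : Injective f)
    (i : Fin M) : #{j | f j ≤ f i} = (f i : ℕ) + 1 := by
  have hsurj := Finite.injective_iff_surjective.1 hf
  calc #{j | f j ≤ f i} = #(({j | f j ≤ f i} : Finset _).image f) :=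
        (card_image_of_injective _ hf).symm
    _ = #(Iic (f i)) := by
        congr 1
        ext v
        obtain ⟨j, rfl⟩ := hsurj v
        simp [hf.eq_iff]
    _ = (f i : ℕ) + 1 := card_Iic _

def Adjacent {N : ℕ} (i j : Fin N) : Prop := (i : ℕ) + 1 = j ∨ (j : ℕ) + 1 = i

theorem adjacent_succAbove_iff {m : ℕ} (k : Fin (m + 2)) (a : Fin (m + 1)) :
    Adjacent (k.succAbove a) k ↔ k = a.castSucc ∨ k = a.succ := by
  unfold Adjacent succAbove
  split_ifs with h <;> simp only [Fin.ext_iff, lt_def, val_castSucc, val_succ] at h ⊢ <;> omega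

end Fin

open Fin

theorem reduce_apply_of_injective {M : ℕ} {w : Fin M → ℕ} (hw : Injective w) (i : Fin M) :
    reduce w i = #{j | w j ≤ w i} := by
  rw [reduce, filter_image, card_image_of_injective _ hw]

theorem reduce_firstw_permWord_apply {m : ℕ} (x : Equiv.Perm (Fin (m + 2))) (i : Fin (m + 1)) :
    reduce (firstw (permWord x)) i = #{j : Fin (m + 1) | x j.castSucc ≤ x i.castSucc} := by
  have hw : ∀ j : Fin (m + 1), firstw (permWord x) j = (x j.castSucc : ℕ) + 1 := fun _ => rfl
  have hinj : Injective (firstw (permWord x)) := fun a b hab => by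
    rw [hw, hw, add_left_inj, ← Fin.ext_iff] at hab
    exact castSucc_injective _ (x.injective hab)
  rw [reduce_apply_of_injective hinj]
  simp only [hw, add_le_add_iff_right, ← le_def]
  rfl

def clusterMember {m : ℕ} (σ : Equiv.Perm (Fin (m + 1))) (k : Fin (m + 2)) :
    Equiv.Perm (Fin (m + 2)) :=
  (finSuccEquivLast.trans (Equiv.optionCongr σ)).trans (finSuccEquiv' k).symm

section clusterMember

variable {m : ℕ} (σ : Equiv.Perm (Fin (m + 1))) (k : Fin (m + 2))

@[simp]
theorem clusterMember_castSucc (i : Fin (m + 1)) :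
    clusterMember σ k i.castSucc = k.succAbove (σ i) := by
  simp [clusterMember]

@[simp]
theorem clusterMember_last : clusterMember σ k (last (m + 1)) = k := by
  simp [clusterMember]

theorem card_filter_succAbove_le {f : Fin (m + 1) → Fin (m + 1)} (hf : Injective f)
    (i : Fin (m + 1)) : #{j | k.succAbove (f j) ≤ k.succAbove (f i)} = (f i : ℕ) + 1 := by
  simp only [succAbove_le_succAbove_iff]
  exact card_filter_apply_le_of_injective hf i

theorem reduce_firstw_clusterMember :
    reduce (firstw (permWord (clusterMember σ k))) = clusterWord σ := by
  funext i
  rw [reduce_firstw_permWord_apply]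
  simp only [clusterMember_castSucc]
  exact card_filter_succAbove_le k σ.injective i

end clusterMember

theorem eq_clusterMember_of_reduce_firstw {m : ℕ} {σ : Equiv.Perm (Fin (m + 1))}
    {x : Equiv.Perm (Fin (m + 2))} (hx : reduce (firstw (permWord x)) = clusterWord σ) :
    x = clusterMember σ (x (last (m + 1))) := by
  set k := x (last (m + 1))
  have hne : ∀ j : Fin (m + 1), x j.castSucc ≠ k := fun j h =>
    (castSucc_lt_last j).ne (x.injective h)
  choose τ hτ using fun j => exists_succAbove_eq (hne j)
  have hτinj : Injective τ := fun a b hab =>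
    castSucc_injective _ (x.injective (by rw [← hτ a, ← hτ b, hab]))
  have hστ : ∀ i, σ i = τ i := fun i => Fin.ext <| Nat.succ_injective <| by
    calc (σ i : ℕ) + 1 = reduce (firstw (permWord x)) i := (congrFun hx i).symm
      _ = #{j | k.succAbove (τ j) ≤ k.succAbove (τ i)} := by
        rw [reduce_firstw_permWord_apply]; simp only [hτ]
      _ = (τ i : ℕ) + 1 := card_filter_succAbove_le k hτinj i
  ext p : 1
  induction p using lastCases with
  | last => rw [clusterMember_last]
  | cast i => rw [clusterMember_castSucc, hστ, hτ]

theorem adjacent_clusterMember_iff {m : ℕ} (σ : Equiv.Perm (Fin (m + 1))) (k : Fin (m + 2)) :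
    Adjacent (clusterMember σ k (0 : Fin (m + 1)).castSucc) (clusterMember σ k (last (m + 1))) ↔
      k = (σ 0).castSucc ∨ k = (σ 0).succ := by
  rw [clusterMember_castSucc, clusterMember_last, adjacent_succAbove_iff]

/-- Each cluster contains exactly one pair of twins. -/
theorem cluster_unique_twin_pair (n : ℕ) (hn : 2 ≤ n) (σ : Equiv.Perm (Fin (n - 1))) :
    ∃! p : Sym2 (Equiv.Perm (Fin n)), ∃ x y : Equiv.Perm (Fin n),
      p = s(x, y) ∧ x ≠ y ∧
      reduce (firstw (permWord x)) = clusterWord σ ∧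
      reduce (firstw (permWord y)) = clusterWord σ ∧
      ((x ⟨0, by omega⟩ : ℕ) + 1 = x ⟨n - 1, by omega⟩ ∨
        (x ⟨n - 1, by omega⟩ : ℕ) + 1 = x ⟨0, by omega⟩) ∧
      ((y ⟨0, by omega⟩ : ℕ) + 1 = y ⟨n - 1, by omega⟩ ∨
        (y ⟨n - 1, by omega⟩ : ℕ) + 1 = y ⟨0, by omega⟩) := by
  obtain ⟨m, rfl⟩ : ∃ m, n = m + 2 := ⟨n - 2, by omega⟩
  set a : Fin (m + 1) := σ (0 : Fin (m + 1))
  have hne : clusterMember σ a.castSucc ≠ clusterMember σ a.succ := fun h =>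
    castSucc_lt_succ.ne (by simpa using congrArg (· (last (m + 1))) h)
  refine Sym2.existsUnique_pair_of_forall_iff hne fun x => ⟨?_, ?_⟩
  · rintro ⟨hx, hadj⟩
    have hadj' : Adjacent (x (0 : Fin (m + 1)).castSucc) (x (last (m + 1))) := hadj
    rw [eq_clusterMember_of_reduce_firstw hx] at hadj' ⊢
    rcases (adjacent_clusterMember_iff σ _).1 hadj' with h | h
    exacts [Or.inl (congrArg _ h), Or.inr (congrArg _ h)]
  · rintro (rfl | rfl)
    · exact ⟨reduce_firstw_clusterMember σ _, (adjacent_clusterMember_iff σ _).2 (Or.inl rfl)⟩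
    · exact ⟨reduce_firstw_clusterMember σ _, (adjacent_clusterMember_iff σ _).2 (Or.inr rfl)⟩
end

section
/- In the cluster graph for n-permutations, for each cluster X there exists a unique cluster Y such that there are exactly two edges from X to Y, and there is no pair of clusters with three or more parallel edges. Equivalently: for each permutation σ of [n-1], there is a unique permutation τ of [n-1] such that exactly two permutations x of [n] satisfy reduce(x_1⋯x_{n-1}) = σ and reduce(x_2⋯x_n) = τ, and no τ admits three or more such x. -/
theorem card_fiber_of_single_collision {α β : Type*} [Finite α] {f : α → β} {p q : α}
    (hpq : p ≠ q) (hf : ∀ x y, f x = f y ↔ x = y ∨ s(x, y) = s(p, q)) :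
    (∃! b, Nat.card {x // f x = b} = 2) ∧ ∀ b, Nat.card {x // f x = b} ≤ 2 := by
  have fiber_p : Nat.card {x // f x = f p} = 2 := by
    have : {x | f x = f p} = {p, q} := by
      ext x
      simp only [Set.mem_ofPred_eq, Set.mem_insert_iff, Set.mem_singleton_iff, hf, Sym2.eq_iff]
      tauto
    rw [← Set.ncard_pair hpq, ← this, ← Nat.card_coe_set_eq]
    rfl
  have fiber_ne : ∀ b, b ≠ f p → Nat.card {x // f x = b} ≤ 1 := by
    refine fun b hb => Finite.card_le_one_iff_subsingleton.2 ⟨fun ⟨x, hx⟩ ⟨y, hy⟩ => ?_⟩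
    by_contra hxy
    have h := ((hf x y).1 (hx.trans hy.symm)).resolve_left (by simpa using hxy)
    rcases Sym2.eq_iff.1 h with ⟨rfl, rfl⟩ | ⟨rfl, rfl⟩
    · exact hb hx.symm
    · exact hb hy.symm
  refine ⟨⟨f p, fiber_p, fun b hb => ?_⟩, fun b => ?_⟩
  · by_contra h
    linarith [fiber_ne b h]
  · by_cases h : b = f p
    · rw [h, fiber_p]
    · linarith [fiber_ne b h]

section Pattern

open Finset

variable {m : ℕ} {α β : Type*} [LinearOrder α] [LinearOrder β]

def HasPattern (w : Fin m → α) (π : Equiv.Perm (Fin m)) : Prop :=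
  ∀ i j, w i ≤ w j ↔ π i ≤ π j

theorem hasPattern_iff_strictMono {w : Fin m → α} {π : Equiv.Perm (Fin m)} :
    HasPattern w π ↔ StrictMono (w ∘ π.symm) := by
  refine ⟨fun h => strictMono_of_le_iff_le fun a b => ?_, fun h i j => ?_⟩
  · simpa using (h (π.symm a) (π.symm b)).symm
  · simpa using h.le_iff_le (a := π i) (b := π j)

theorem HasPattern.injective {w : Fin m → α} {π : Equiv.Perm (Fin m)} (h : HasPattern w π) :
    Function.Injective w := fun i j hij =>
  π.injective (le_antisymm ((h i j).1 hij.le) ((h j i).1 hij.ge))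

theorem HasPattern.unique {w : Fin m → α} {π π' : Equiv.Perm (Fin m)} (h : HasPattern w π)
    (h' : HasPattern w π') : π = π' := by
  have hw := h.injective
  rw [hasPattern_iff_strictMono] at h h'
  have : w ∘ π.symm = w ∘ π'.symm :=
    (h.range_inj h').1 (by simp only [Set.range_comp, Equiv.range_eq_univ])
  exact Equiv.symm_bijective.injective (Equiv.ext fun a => hw (congrFun this a))

theorem hasPattern_comp_iff {w : Fin m → α} {π : Equiv.Perm (Fin m)} {g : α → β}
    (hg : StrictMono g) : HasPattern (g ∘ w) π ↔ HasPattern w π := by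
  simp only [HasPattern, Function.comp_apply, hg.le_iff_le]

/-- `Tuple.sort w` lists the positions in increasing order of `w`; its inverse sends a position
to its rank. -/
noncomputable def pattern (w : Fin m → α) : Equiv.Perm (Fin m) := (Tuple.sort w)⁻¹

theorem hasPattern_pattern {w : Fin m → α} (hw : Function.Injective w) :
    HasPattern w (pattern w) :=
  hasPattern_iff_strictMono.2 <|
    (Tuple.monotone_sort w).strictMono_of_injective (hw.comp (Tuple.sort w).injective)

theorem pattern_eq_pattern_iff {w w' : Fin m → α} (hw : Function.Injective w)
    (hw' : Function.Injective w') :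
    pattern w = pattern w' ↔ ∀ i j, w i ≤ w j ↔ w' i ≤ w' j := by
  refine ⟨fun h i j => ?_, fun h => ?_⟩
  · rw [hasPattern_pattern hw i j, hasPattern_pattern hw' i j, h]
  · exact HasPattern.unique (fun i j => (h i j).symm.trans (hasPattern_pattern hw i j))
      (hasPattern_pattern hw')

theorem reduce_le_reduce_iff (w : Fin m → ℕ) (i j : Fin m) :
    reduce w i ≤ reduce w j ↔ w i ≤ w j := by
  refine ⟨fun h => ?_, fun h =>
    card_le_card (monotone_filter_right _ fun v _ hv => hv.trans h)⟩
  by_contra! hji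
  refine h.not_gt (card_lt_card
    ⟨monotone_filter_right _ fun v _ hv => hv.trans hji.le, fun hsub => ?_⟩)
  have := hsub (mem_filter.2 ⟨mem_image_of_mem w (mem_univ i), le_rfl⟩)
  exact (mem_filter.1 this).2.not_gt hji

theorem reduce_eq_iff {w : Fin m → ℕ} {π : Equiv.Perm (Fin m)} :
    reduce w = (fun i => (π i : ℕ) + 1) ↔ HasPattern w π := by
  refine ⟨fun h i j => ?_, fun h => funext fun i => ?_⟩
  · simp only [← reduce_le_reduce_iff w, h, Fin.le_def, Nat.add_le_add_iff_right]
  calc reduce w i = #{j | π j ≤ π i} := by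
        rw [reduce, filter_image, card_image_of_injective _ h.injective]
        simp only [h _ i]
    _ = #{v | v ≤ π i} := card_equiv π (by simp)
    _ = π i + 1 := by rw [filter_ge_eq_Iic, Fin.card_Iic]

end Pattern

section Edges

variable {m : ℕ}

/-- The permutation of `[m+1]` taking the value `k` last, whose first `m` values have pattern
`σ`. -/
def snocPerm (σ : Equiv.Perm (Fin m)) (k : Fin (m + 1)) : Equiv.Perm (Fin (m + 1)) :=
  (finSuccEquivLast.trans σ.optionCongr).trans (finSuccEquiv' k).symm

@[simp]
theorem snocPerm_castSucc (σ : Equiv.Perm (Fin m)) (k : Fin (m + 1)) (i : Fin m) :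
    snocPerm σ k i.castSucc = k.succAbove (σ i) := by
  simp [snocPerm]

@[simp]
theorem snocPerm_last (σ : Equiv.Perm (Fin m)) (k : Fin (m + 1)) :
    snocPerm σ k (Fin.last m) = k := by
  simp [snocPerm]

theorem snocPerm_injective (σ : Equiv.Perm (Fin m)) : Function.Injective (snocPerm σ) :=
  fun k k' h => by rw [← snocPerm_last σ k, h, snocPerm_last]

theorem hasPattern_snocPerm (σ : Equiv.Perm (Fin m)) (k : Fin (m + 1)) :
    HasPattern (fun i => snocPerm σ k i.castSucc) σ := fun i j => by
  simp [(Fin.strictMono_succAbove k).le_iff_le]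

theorem eq_snocPerm_of_hasPattern {x : Equiv.Perm (Fin (m + 1))} {σ : Equiv.Perm (Fin m)}
    (h : HasPattern (fun i => x i.castSucc) σ) : x = snocPerm σ (x (Fin.last m)) := by
  have hx : x ∘ Fin.castSucc ∘ σ.symm = (x (Fin.last m)).succAbove := by
    refine ((hasPattern_iff_strictMono.1 h).range_inj (Fin.strictMono_succAbove _)).1 ?_
    rw [Set.range_comp, Equiv.range_eq_univ, Set.image_univ]
    change Set.range (x ∘ Fin.castSucc) = _
    rw [Set.range_comp, ← Fin.succAbove_last, Fin.range_succAbove, Fin.range_succAbove,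
      Set.image_compl_eq x.bijective, Set.image_singleton]
  refine Equiv.ext fun i => Fin.lastCases ?_ (fun j => ?_) i
  · simp
  · simpa using congrFun hx (σ j)

noncomputable def edgeTarget (σ : Equiv.Perm (Fin m)) (k : Fin (m + 1)) : Equiv.Perm (Fin m) :=
  pattern fun i => snocPerm σ k i.succ

theorem isEdge_iff {x : Equiv.Perm (Fin (m + 1))} {σ τ : Equiv.Perm (Fin m)} :
    isEdge (n := m + 1) x σ τ ↔
      HasPattern (fun i => x i.castSucc) σ ∧ HasPattern (fun i => x i.succ) τ := by
  have hg : StrictMono fun v : Fin (m + 1) => (v : ℕ) + 1 := fun _ _ h =>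
    Nat.succ_lt_succ h
  exact (reduce_eq_iff.trans (hasPattern_comp_iff hg)).and
    (reduce_eq_iff.trans (hasPattern_comp_iff hg))

theorem setOf_isEdge (σ τ : Equiv.Perm (Fin m)) :
    {x | isEdge (n := m + 1) x σ τ} = snocPerm σ '' {k | edgeTarget σ k = τ} := by
  have suffix_injective (x : Equiv.Perm (Fin (m + 1))) :
      Function.Injective fun i : Fin m => x i.succ := x.injective.comp (Fin.succ_injective _)
  ext x
  simp only [Set.mem_image, Set.mem_ofPred_eq, isEdge_iff]
  constructor
  · rintro ⟨h, h'⟩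
    have hx := eq_snocPerm_of_hasPattern h
    refine ⟨x (Fin.last m), ?_, hx.symm⟩
    rw [edgeTarget, ← hx]
    exact (hasPattern_pattern (suffix_injective x)).unique h'
  · rintro ⟨k, rfl, rfl⟩
    exact ⟨hasPattern_snocPerm σ k, hasPattern_pattern (suffix_injective _)⟩

theorem card_isEdge (σ τ : Equiv.Perm (Fin m)) :
    Nat.card {x // isEdge (n := m + 1) x σ τ} = Nat.card {k // edgeTarget σ k = τ} := by
  change Nat.card {x | isEdge (n := m + 1) x σ τ} = Nat.card {k | edgeTarget σ k = τ}
  rw [setOf_isEdge, Nat.card_image_of_injective (snocPerm_injective σ)]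

end Edges

section Collisions

variable {m : ℕ}

theorem snocPerm_castSucc_le_last_iff (σ : Equiv.Perm (Fin m)) (k : Fin (m + 1)) (i : Fin m) :
    snocPerm σ k i.castSucc ≤ snocPerm σ k (Fin.last m) ↔ (σ i).castSucc < k := by
  rw [snocPerm_castSucc, snocPerm_last, le_iff_lt_or_eq, or_iff_left (Fin.succAbove_ne _ _),
    Fin.succAbove_lt_iff_castSucc_lt]

theorem snocPerm_last_le_castSucc_iff (σ : Equiv.Perm (Fin m)) (k : Fin (m + 1)) (i : Fin m) :
    snocPerm σ k (Fin.last m) ≤ snocPerm σ k i.castSucc ↔ ¬(σ i).castSucc < k := by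
  rw [← snocPerm_castSucc_le_last_iff, not_le, lt_iff_le_and_ne, and_iff_left]
  exact (snocPerm σ k).injective.ne (Fin.castSucc_lt_last i).ne'

/-- Among the letters of the suffix other than the last one, both edges have pattern `σ`, so only
the comparisons with the last letter can differ. -/
theorem edgeTarget_eq_edgeTarget_iff_lt [NeZero m] (σ : Equiv.Perm (Fin m)) (k k' : Fin (m + 1)) :
    edgeTarget σ k = edgeTarget σ k' ↔
      ∀ j, j ≠ 0 → ((σ j).castSucc < k ↔ (σ j).castSucc < k') := by
  rw [edgeTarget, edgeTarget,
    pattern_eq_pattern_iff (w := fun i => snocPerm σ k i.succ)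
      (w' := fun i => snocPerm σ k' i.succ)
      ((snocPerm σ k).injective.comp (Fin.succ_injective _))
      ((snocPerm σ k').injective.comp (Fin.succ_injective _))]
  constructor
  · intro h j hj
    obtain ⟨i, hi⟩ := Fin.exists_succ_eq.2 (Fin.castSucc_ne_zero_iff.2 hj)
    obtain ⟨l, hl⟩ := Fin.exists_succ_eq.2 (Fin.last_pos' (n := m)).ne'
    simpa only [hi, hl, snocPerm_castSucc_le_last_iff] using h i l
  · intro h i j
    have ne_zero {a : Fin m} {i : Fin m} (ha : i.succ = a.castSucc) : a ≠ 0 :=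
      Fin.castSucc_ne_zero_iff.1 (ha ▸ Fin.succ_ne_zero i)
    rcases Fin.eq_castSucc_or_eq_last i.succ with ⟨a, ha⟩ | ha <;>
      rcases Fin.eq_castSucc_or_eq_last j.succ with ⟨b, hb⟩ | hb <;> rw [ha, hb]
    · exact (hasPattern_snocPerm σ k a b).trans (hasPattern_snocPerm σ k' a b).symm
    · rw [snocPerm_castSucc_le_last_iff, snocPerm_castSucc_le_last_iff, h a (ne_zero ha)]
    · rw [snocPerm_last_le_castSucc_iff, snocPerm_last_le_castSucc_iff, h b (ne_zero hb)]
    · simp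

theorem forall_ne_castSucc_lt_iff {a : Fin m} {k k' : Fin (m + 1)} :
    (∀ v, v ≠ a → (v.castSucc < k ↔ v.castSucc < k')) ↔
      k = k' ∨ s(k, k') = s(a.castSucc, a.succ) := by
  simp only [Sym2.eq_iff, ne_eq, Fin.ext_iff, Fin.lt_def, Fin.forall_iff, Fin.val_castSucc,
    Fin.val_succ]
  have := a.isLt
  constructor
  · intro h
    have := h k; have := h k'; have := h (k + 1); have := h (k' + 1)
    omega
  · intro h v hv hva
    omega

theorem edgeTarget_eq_edgeTarget_iff [NeZero m] (σ : Equiv.Perm (Fin m)) (k k' : Fin (m + 1)) :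
    edgeTarget σ k = edgeTarget σ k' ↔ k = k' ∨ s(k, k') = s((σ 0).castSucc, (σ 0).succ) := by
  rw [edgeTarget_eq_edgeTarget_iff_lt, ← forall_ne_castSucc_lt_iff, σ.forall_congr_left]
  simp only [Equiv.apply_symm_apply, ne_eq, Equiv.symm_apply_eq]

end Collisions

/-- For each cluster `σ` there is a unique cluster `τ` joined to it by exactly two
parallel edges, and no cluster is joined from `σ` by three or more parallel edges. -/
theorem unique_double_edge_out (n : ℕ) (hn : 3 ≤ n) (σ : Equiv.Perm (Fin (n - 1))) :
    (∃! τ : Equiv.Perm (Fin (n - 1)),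
      Nat.card {x : Equiv.Perm (Fin n) // isEdge x σ τ} = 2) ∧
    (∀ τ : Equiv.Perm (Fin (n - 1)),
      Nat.card {x : Equiv.Perm (Fin n) // isEdge x σ τ} ≤ 2) := by
  obtain ⟨m, rfl⟩ : ∃ m, n = m + 1 := ⟨n - 1, by omega⟩
  have : NeZero m := ⟨by omega⟩
  change Equiv.Perm (Fin m) at σ
  simp only [card_isEdge]
  exact card_fiber_of_single_collision Fin.castSucc_lt_succ.ne (edgeTarget_eq_edgeTarget_iff σ)
end

section
/- For n ≥ 4, no permutation in the set 𝒫* contains three consecutive entries order-isomorphic to 213 or to 231. That is, for every π ∈ 𝒫* and every index i with 1 ≤ i ≤ n−2, the triple (π_i, π_{i+1}, π_{i+2}) does not satisfy (π_{i+1} < π_i < π_{i+2}) and does not satisfy (π_{i+2} < π_i < π_{i+1}). -/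
/-- The word `(n, n-1, …, k, 1, 2, …, k-1)`. -/
def wordA (n k : ℕ) : Fin n → ℕ :=
  fun i => if i.val ≤ n - k then n - i.val else i.val - (n - k)

/-- The identity word `(1, 2, …, n)`. -/
def wordId (n : ℕ) : Fin n → ℕ := fun i => i.val + 1

/-- The word `(1, 2, …, k, n, k+1, n-1, n-2, …, k+2)`. -/
def wordB (n k : ℕ) : Fin n → ℕ :=
  fun i => if i.val < k then i.val + 1 else if i.val = k then n
    else if i.val = k + 1 then k + 1 else n + k + 1 - i.val

/-- The word `(n, 1, n-1, n-2, …, 2)`. -/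
def wordC1 (n : ℕ) : Fin n → ℕ :=
  fun i => if i.val = 0 then n else if i.val = 1 then 1 else n + 1 - i.val

/-- The word `(1, n, n-1, …, 2)`. -/
def wordC2 (n : ℕ) : Fin n → ℕ :=
  fun i => if i.val = 0 then 1 else n + 1 - i.val

/-- The word `(n-1, 1, 2, …, n-2, n)`. -/
def wordE1 (n : ℕ) : Fin n → ℕ :=
  fun i => if i.val = 0 then n - 1 else if i.val = n - 1 then n else i.val

/-- The word `(2, n, n-1, …, 4, 3, 1)`. -/
def wordE2 (n : ℕ) : Fin n → ℕ :=
  fun i => if i.val = 0 then 2 else if i.val = n - 1 then 1 else n + 1 - i.val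

/-- The set 𝒫 of `2n` permutations of `[n]` used for the gluing. -/
def Pset (n : ℕ) : Set (Fin n → ℕ) :=
  {w | (∃ k, 1 ≤ k ∧ k ≤ n ∧ w = wordA n k) ∨ w = wordId n ∨
    (∃ k, 1 ≤ k ∧ k ≤ n - 2 ∧ w = wordB n k) ∨ w = wordC1 n ∨ w = wordC2 n}

/-- The set 𝒫* = 𝒫 together with the two extra twin permutations. -/
def PstarSet (n : ℕ) : Set (Fin n → ℕ) := Pset n ∪ {wordE1 n, wordE2 n}

/- Every word of 𝒫* is a concatenation of a few monotone runs. A consecutive triple inside a run is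
monotone, and at each junction the values jump so that the first entry of the triple never lies
strictly between the other two. The twins `(n-1, 1, 2, …, n-2, n)` and `(2, n, …, 3, 1)` need
`n ≥ 4`: for `n = 3` they are `213` and `231` themselves. -/

def AvoidsConsecutive213And231 {n : ℕ} (w : Fin n → ℕ) : Prop :=
  ∀ i j k : Fin n, j.val = i.val + 1 → k.val = i.val + 2 →
    ¬(w j < w i ∧ w i < w k) ∧ ¬(w k < w i ∧ w i < w j)

theorem avoidsConsecutive213And231_wordA (n k : ℕ) :
    AvoidsConsecutive213And231 (wordA n k) := by
  rintro ⟨i, -⟩ ⟨_, -⟩ ⟨_, -⟩ rfl rfl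
  simp only [wordA]
  constructor <;> rintro ⟨h₁, h₂⟩ <;> split_ifs at h₁ h₂ <;> omega

theorem avoidsConsecutive213And231_wordId (n : ℕ) : AvoidsConsecutive213And231 (wordId n) := by
  rintro ⟨i, -⟩ ⟨_, -⟩ ⟨_, -⟩ rfl rfl
  simp only [wordId]
  omega

theorem avoidsConsecutive213And231_wordB (n k : ℕ) :
    AvoidsConsecutive213And231 (wordB n k) := by
  rintro ⟨i, -⟩ ⟨_, -⟩ ⟨_, -⟩ rfl rfl
  simp only [wordB]
  constructor <;> rintro ⟨h₁, h₂⟩ <;> split_ifs at h₁ h₂ <;> omega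

theorem avoidsConsecutive213And231_wordC1 (n : ℕ) : AvoidsConsecutive213And231 (wordC1 n) := by
  rintro ⟨i, -⟩ ⟨_, -⟩ ⟨_, -⟩ rfl rfl
  simp only [wordC1]
  constructor <;> rintro ⟨h₁, h₂⟩ <;> split_ifs at h₁ h₂ <;> omega

theorem avoidsConsecutive213And231_wordC2 (n : ℕ) : AvoidsConsecutive213And231 (wordC2 n) := by
  rintro ⟨i, -⟩ ⟨_, -⟩ ⟨_, -⟩ rfl rfl
  simp only [wordC2]
  constructor <;> rintro ⟨h₁, h₂⟩ <;> split_ifs at h₁ h₂ <;> omega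

theorem avoidsConsecutive213And231_wordE1 {n : ℕ} (hn : 4 ≤ n) :
    AvoidsConsecutive213And231 (wordE1 n) := by
  rintro ⟨i, -⟩ ⟨_, -⟩ ⟨_, -⟩ rfl rfl
  simp only [wordE1]
  constructor <;> rintro ⟨h₁, h₂⟩ <;> split_ifs at h₁ h₂ <;> omega

theorem avoidsConsecutive213And231_wordE2 {n : ℕ} (hn : 4 ≤ n) :
    AvoidsConsecutive213And231 (wordE2 n) := by
  rintro ⟨i, -⟩ ⟨_, -⟩ ⟨_, -⟩ rfl rfl
  simp only [wordE2]
  constructor <;> rintro ⟨h₁, h₂⟩ <;> split_ifs at h₁ h₂ <;> omega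

/-- For `n ≥ 4`, no permutation in 𝒫* contains three consecutive entries
order-isomorphic to 213 or to 231. -/
theorem Pstar_avoids_213_231 (n : ℕ) (hn : 4 ≤ n) (π : Fin n → ℕ)
    (hπ : π ∈ PstarSet n) (i : ℕ) (hi : i + 2 < n) :
    ¬(π ⟨i + 1, by omega⟩ < π ⟨i, by omega⟩ ∧ π ⟨i, by omega⟩ < π ⟨i + 2, hi⟩) ∧
    ¬(π ⟨i + 2, hi⟩ < π ⟨i, by omega⟩ ∧ π ⟨i, by omega⟩ < π ⟨i + 1, by omega⟩) := by
  suffices h : AvoidsConsecutive213And231 π from h _ _ _ rfl rfl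
  obtain (⟨k, -, -, rfl⟩ | rfl | ⟨k, -, -, rfl⟩ | rfl | rfl) | (rfl | rfl) := hπ
  exacts [avoidsConsecutive213And231_wordA n k, avoidsConsecutive213And231_wordId n,
    avoidsConsecutive213And231_wordB n k, avoidsConsecutive213And231_wordC1 n,
    avoidsConsecutive213And231_wordC2 n, avoidsConsecutive213And231_wordE1 hn,
    avoidsConsecutive213And231_wordE2 hn]
end

section
/- Let T = (e_1, …, e_ℓ) be a trail in a compressed cluster graph for n-permutations with labels L(e_i). Then there exists a word w = w_1 ⋯ w_{ℓ+n−1} over the natural numbers such that for every i with 1 ≤ i ≤ ℓ, reduce(w_i w_{i+1} ⋯ w_{i+n−1}) equals L(e_i) (interpreting the label of a compressed edge as the length-n word x_1⋯x_{n−1}x_1 with x_1 = x_n). -/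
/-!
Only the relative order of the letters in each window matters. Build the word one letter at a
time: the first `n - 1` letters of window `i + 1` are the last `n - 1` letters of window `i`, so by
consistency they already have the pattern of the first `n - 1` letters of `L (i + 1)`. The new
last letter can always be placed: either it copies an earlier letter of the window, or, after
replacing every old letter `x` by `2 x + 1`, a suitable even value fits between the old letters.
-/

def SamePattern {ι α β : Type*} [LE α] [LE β] (u : ι → α) (v : ι → β) : Prop :=
  ∀ a b, u a ≤ u b ↔ v a ≤ v b

namespace SamePattern

variable {ι κ α β γ : Type*} [LE α] [LE β] [LE γ] {u : ι → α} {v : ι → β} {w : ι → γ}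

theorem symm (h : SamePattern u v) : SamePattern v u :=
  fun a b => (h a b).symm

theorem trans (h₁ : SamePattern u v) (h₂ : SamePattern v w) : SamePattern u w :=
  fun a b => (h₁ a b).trans (h₂ a b)

theorem comp (h : SamePattern u v) (f : κ → ι) : SamePattern (u ∘ f) (v ∘ f) :=
  fun a b => h (f a) (f b)

end SamePattern

theorem Finset.card_image_eq_card_image_of_eq_iff {ι α β : Type*} [DecidableEq α] [DecidableEq β]
    {s : Finset ι} {u : ι → α} {v : ι → β} (h : ∀ a ∈ s, ∀ b ∈ s, u a = u b ↔ v a = v b) :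
    (s.image u).card = (s.image v).card := by
  classical
  induction s using Finset.induction_on with
  | empty => simp
  | insert x s _ ih =>
    have hx : u x ∈ s.image u ↔ v x ∈ s.image v := by
      simp only [Finset.mem_image]
      exact exists_congr fun y => and_congr_right fun hy =>
        h y (Finset.mem_insert_of_mem hy) x (Finset.mem_insert_self x s)
    rw [Finset.image_insert, Finset.image_insert, Finset.card_insert_eq_ite,
      Finset.card_insert_eq_ite, ih fun a ha b hb =>
        h a (Finset.mem_insert_of_mem ha) b (Finset.mem_insert_of_mem hb)]
    simp only [hx]

section reduce

variable {m : ℕ}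

theorem reduce_le_reduce (w : Fin m → ℕ) {a b : Fin m} (h : w a ≤ w b) :
    reduce w a ≤ reduce w b :=
  Finset.card_le_card fun _ => by
    simp only [Finset.mem_filter]
    exact And.imp_right (·.trans h)

theorem reduce_lt_reduce (w : Fin m → ℕ) {a b : Fin m} (h : w a < w b) :
    reduce w a < reduce w b := by
  refine Finset.card_lt_card ((Finset.ssubset_iff_of_subset fun _ => ?_).2 ⟨w b, ?_, ?_⟩)
  · simp only [Finset.mem_filter]
    exact And.imp_right (·.trans h.le)
  · simp
  · simpa using h

theorem samePattern_reduce (w : Fin m → ℕ) : SamePattern (reduce w) w := fun _ _ =>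
  ⟨fun h => not_lt.1 fun hlt => (reduce_lt_reduce w hlt).not_ge h, reduce_le_reduce w⟩

theorem reduce_eq_reduce_iff {u v : Fin m → ℕ} : reduce u = reduce v ↔ SamePattern u v := by
  refine ⟨fun h => (samePattern_reduce u).symm.trans (h ▸ samePattern_reduce v), fun h => ?_⟩
  funext i
  unfold reduce
  rw [Finset.filter_image, Finset.filter_image]
  simp only [h _ i]
  exact Finset.card_image_eq_card_image_of_eq_iff fun a _ b _ => by
    rw [le_antisymm_iff, le_antisymm_iff, h a b, h b a]

end reduce

theorem samePattern_two_mul_add_one {ι : Type*} (u : ι → ℕ) :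
    SamePattern (fun a => 2 * u a + 1) u :=
  fun _ _ => by simp only; omega

theorem exists_insert_of_samePattern {ι β : Type*} [Fintype ι] [LinearOrder β] {u : ι → ℕ}
    {v : ι → β} (h : SamePattern u v) (t : β) :
    ∃ c, ∀ a, (2 * u a + 1 ≤ c ↔ v a ≤ t) ∧ (c ≤ 2 * u a + 1 ↔ t ≤ v a) := by
  classical
  by_cases ht : ∃ a₀, v a₀ = t
  · obtain ⟨a₀, rfl⟩ := ht
    refine ⟨2 * u a₀ + 1, fun a => ?_⟩
    rw [← h a a₀, ← h a₀ a]
    omega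
  push Not at ht
  refine ⟨2 * (Finset.univ.filter (v · < t)).sup (u · + 1), fun a => ?_⟩
  rcases (ht a).lt_or_gt with hlt | hgt
  · have : u a + 1 ≤ (Finset.univ.filter (v · < t)).sup (u · + 1) :=
      Finset.le_sup (f := (u · + 1)) (by simpa using hlt)
    exact ⟨iff_of_true (by omega) hlt.le, iff_of_false (by omega) hlt.not_ge⟩
  · have : (Finset.univ.filter (v · < t)).sup (u · + 1) ≤ u a := Finset.sup_le fun b hb => by
      have := (h a b).not.2 (not_le.2 ((Finset.mem_filter.1 hb).2.trans hgt))
      omega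
    exact ⟨iff_of_false (by omega) hgt.not_ge, iff_of_true (by omega) hgt.le⟩

theorem exists_samePattern_snoc {m : ℕ} {u : Fin m → ℕ} {v : Fin (m + 1) → ℕ}
    (h : SamePattern u (v ∘ Fin.castSucc)) :
    ∃ c, SamePattern (Fin.snoc (fun a => 2 * u a + 1) c : Fin (m + 1) → ℕ) v := by
  obtain ⟨c, hc⟩ := exists_insert_of_samePattern h (v (Fin.last m))
  refine ⟨c, fun a b => ?_⟩
  induction a using Fin.lastCases <;> induction b using Fin.lastCases <;>
    simp only [Fin.snoc_castSucc, Fin.snoc_last, le_refl, (hc _).1, (hc _).2,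
      Function.comp_apply]
  exact (samePattern_two_mul_add_one u).trans h _ _

theorem exists_word_windows_samePattern {m : ℕ} (L : ℕ → Fin (m + 1) → ℕ) (k : ℕ)
    (hL : ∀ i, i + 1 < k → SamePattern (L i ∘ Fin.succ) (L (i + 1) ∘ Fin.castSucc)) :
    ∃ W : ℕ → ℕ, ∀ i < k, SamePattern (fun a : Fin (m + 1) => W (i + a)) (L i) := by
  induction k with
  | zero => exact ⟨id, fun _ hi => absurd hi (Nat.not_lt_zero _)⟩
  | succ k ih =>
    obtain _ | j := k
    · refine ⟨fun p => L 0 (Fin.ofNat (m + 1) p), fun i hi a b => ?_⟩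
      obtain rfl : i = 0 := by omega
      simp
    obtain ⟨W, hW⟩ := ih fun i hi => hL i (by omega)
    have hprefix : SamePattern (fun a : Fin m => W (j + 1 + a)) (L (j + 1) ∘ Fin.castSucc) := by
      refine SamePattern.trans (fun a b => ?_)
        (((hW j (by omega)).comp Fin.succ).trans (hL j (by omega)))
      simp only [Function.comp, Fin.val_succ, ← add_assoc, add_right_comm j 1]
    obtain ⟨c, hc⟩ := exists_samePattern_snoc hprefix
    refine ⟨fun p => if p = j + 1 + m then c else 2 * W p + 1, fun i hi => ?_⟩
    rcases Nat.lt_succ_iff_lt_or_eq.1 hi with hi | rfl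
    · intro a b
      simp only [show ∀ a : Fin (m + 1), i + a ≠ j + 1 + m by omega, if_false]
      exact ((samePattern_two_mul_add_one _).trans (hW i hi)) a b
    · convert hc using 1
      funext a
      induction a using Fin.lastCases with
      | last => simp
      | cast a => simp [a.is_lt.ne]

/-- Lemma 4: given a trail `e₁, …, e_ℓ` in a compressed cluster graph for
`n`-permutations, with labels `L(eᵢ)` (reduced words of length `n` that are either
permutations of `[n]` or compressed labels, whose first and last letters agree and are
otherwise injective), there is a word `w` of length `ℓ + n - 1` whose `i`-th window of
length `n` reduces to `L(eᵢ)` for every `i`. -/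
theorem trail_gives_word (n ℓ : ℕ)
    (L : Fin ℓ → Fin n → ℕ)
    (hred : ∀ i, reduce (L i) = L i)
    (hcons : ∀ i : ℕ, (h : i + 1 < ℓ) →
      reduce (lastw (L ⟨i, by omega⟩)) = reduce (firstw (L ⟨i + 1, h⟩)))
    : ∃ w : Fin (ℓ + n - 1) → ℕ, ∀ i : Fin ℓ,
        reduce (fun a : Fin n =>
          w ⟨i.val + a.val, by have := i.isLt; have := a.isLt; omega⟩) = L i := by
  obtain _ | m := n
  · exact ⟨fun _ => 0, fun _ => funext fun a => a.elim0⟩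
  obtain ⟨W, hW⟩ :=
    exists_word_windows_samePattern (fun i => if h : i < ℓ then L ⟨i, h⟩ else 0) ℓ fun i hi => by
      simp only [dif_pos hi, dif_pos (Nat.lt_of_succ_lt hi)]
      exact reduce_eq_reduce_iff.1 (hcons i hi)
  refine ⟨fun p => W p, fun i => ?_⟩
  rw [← hred i]
  exact reduce_eq_reduce_iff.2 (by simpa using hW i i.isLt)
end

section
/- Let n ≥ 4 and let w = w_1 ⋯ w_k be a word of natural numbers with k ≥ n−1 such that every permutation of [n] is order-isomorphic to at most one n-window of w, the first n−1 letters of w are strictly decreasing, the last n−1 letters of w are strictly decreasing, and no n-window of w is order-isomorphic to a permutation in 𝒫. Then there exists a cyclic word z of length k + n + 1 such that every permutation of [n] covered by w, and every permutation in 𝒫, is order-isomorphic to exactly one cyclic n-window of z, and these are all distinct windows. -/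
/-- Two words are order-isomorphic. -/
def OrdIso {n : ℕ} (u v : Fin n → ℕ) : Prop := ∀ a b : Fin n, u a < u b ↔ v a < v b

/-- The `n`-window of `w` starting at position `i`. -/
def winAt {k : ℕ} (w : Fin k → ℕ) (i n : ℕ) (h : i + n ≤ k) : Fin n → ℕ :=
  fun a => w ⟨i + a.val, by have := a.isLt; omega⟩

/-- The cyclic `n`-window of the cyclic word `z` starting at position `j`. -/
def cwin {m : ℕ} (z : Fin m → ℕ) (j : Fin m) (n : ℕ) : Fin n → ℕ :=
  fun a => z ⟨(j.val + a.val) % m, Nat.mod_lt _ j.pos⟩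

/-! Shift `w` above `n` and close it into a cycle through `1, 2, …, n - 1, M, n`, where `M`
exceeds every letter. A window inside `w` keeps its pattern. Since the first and the last
`n - 1` letters of `w` decrease, the pattern of each of the `2 * n` windows meeting the inserted
letters does not depend on `w`, and these patterns are exactly the `2 * n` distinct permutations
of `𝒫`. A window inside `w` never has a pattern in `𝒫` and matches a given permutation at most
once, so every permutation is covered at most once. -/

namespace OrdIso

variable {n : ℕ} {u v x : Fin n → ℕ}

theorem symm (h : OrdIso u v) : OrdIso v u := fun a b => (h a b).symm

theorem trans (h : OrdIso u v) (h' : OrdIso v x) : OrdIso u x := fun a b => (h a b).trans (h' a b)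

theorem of_lt_imp (hv : Function.Injective v) (h : ∀ a b, v a < v b → u a < u b) :
    OrdIso u v := by
  intro a b
  refine ⟨fun hab => ?_, h a b⟩
  rcases lt_trichotomy (v a) (v b) with hlt | heq | hgt
  · exact hlt
  · exact absurd hab (by rw [hv heq]; exact lt_irrefl _)
  · exact absurd (h b a hgt) (not_lt.2 hab.le)

theorem injective (h : OrdIso u v) (hu : Function.Injective u) : Function.Injective v := by
  intro a b hab
  by_contra hne
  rcases lt_or_gt_of_ne (hu.ne hne) with hlt | hlt
  · exact (h a b).1 hlt |>.ne hab
  · exact (h b a).1 hlt |>.ne hab.symm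

end OrdIso

section reduce

variable {n : ℕ} {u v : Fin n → ℕ}

theorem reduce_apply_of_injective_s14 (hu : Function.Injective u) (a : Fin n) :
    reduce u a = (Finset.univ.filter fun b => u b ≤ u a).card := by
  rw [reduce, Finset.filter_image, Finset.card_image_of_injective _ hu]

theorem reduce_eq_self (hu : Function.Injective u) (hu' : ∀ a, u a ∈ Finset.Icc 1 n) :
    reduce u = u := by
  have himage : Finset.univ.image u = Finset.Icc 1 n := by
    refine Finset.eq_of_subset_of_card_le (fun _ hx => ?_) ?_
    · obtain ⟨a, -, rfl⟩ := Finset.mem_image.1 hx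
      exact hu' a
    · rw [Finset.card_image_of_injective _ hu, Finset.card_univ, Fintype.card_fin, Nat.card_Icc]
      omega
  funext a
  have ha := Finset.mem_Icc.1 (hu' a)
  have hfilter : (Finset.Icc 1 n).filter (· ≤ u a) = Finset.Icc 1 (u a) := by
    ext x
    simp only [Finset.mem_filter, Finset.mem_Icc]
    omega
  rw [reduce, himage, hfilter, Nat.card_Icc, Nat.add_sub_cancel]

theorem OrdIso.reduce_eq (h : OrdIso u v) (hu : Function.Injective u) : reduce u = reduce v := by
  funext a
  rw [reduce_apply_of_injective_s14 hu, reduce_apply_of_injective_s14 (h.injective hu)]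
  congr 1
  ext b
  simp only [Finset.mem_filter, Finset.mem_univ, true_and, ← not_lt, h a b]

theorem OrdIso.eq (h : OrdIso u v) (hu : Function.Injective u) (hv : Function.Injective v)
    (hu' : ∀ a, u a ∈ Finset.Icc 1 n) (hv' : ∀ a, v a ∈ Finset.Icc 1 n) : u = v := by
  rw [← reduce_eq_self hu hu', h.reduce_eq hu, reduce_eq_self hv hv']

end reduce

theorem permWord_injective {n : ℕ} (π : Equiv.Perm (Fin n)) : Function.Injective (permWord π) :=
  fun a b hab => π.injective (Fin.ext (by simpa [permWord] using hab))

theorem permWord_mem_Icc {n : ℕ} (π : Equiv.Perm (Fin n)) (a : Fin n) :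
    permWord π a ∈ Finset.Icc 1 n :=
  Finset.mem_Icc.2 ⟨Nat.le_add_left 1 _, (π a).isLt⟩

theorem wordA_one {n : ℕ} : wordA n 1 = wordA n 2 := by
  funext i
  simp only [wordA]
  split_ifs <;> omega

/-- The pattern of the window of `gluedWord n k w` at position `k - (n - 1) + t`,
for `t < 2 * n`. -/
def boundaryPattern (n t : ℕ) : Fin n → ℕ :=
  if t ≤ n - 2 then wordA n (t + 2)
  else if t = n - 1 then wordId n
  else if t ≤ 2 * n - 3 then wordB n (2 * n - 2 - t)
  else if t = 2 * n - 2 then wordC1 n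
  else wordC2 n

section boundaryPattern

variable {n t : ℕ}

theorem boundaryPattern_cases (ht : t < 2 * n) :
    (t ≤ n - 2 ∧ boundaryPattern n t = wordA n (t + 2)) ∨
    (t = n - 1 ∧ boundaryPattern n t = wordId n) ∨
    (n ≤ t ∧ t ≤ 2 * n - 3 ∧ boundaryPattern n t = wordB n (2 * n - 2 - t)) ∨
    (t = 2 * n - 2 ∧ boundaryPattern n t = wordC1 n) ∨
    (t = 2 * n - 1 ∧ boundaryPattern n t = wordC2 n) := by
  unfold boundaryPattern
  split_ifs with h₁ h₂ h₃ h₄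
  · exact Or.inl ⟨h₁, rfl⟩
  · exact Or.inr (Or.inl ⟨h₂, rfl⟩)
  · exact Or.inr (Or.inr (Or.inl ⟨by omega, h₃, rfl⟩))
  · exact Or.inr (Or.inr (Or.inr (Or.inl ⟨h₄, rfl⟩)))
  · exact Or.inr (Or.inr (Or.inr (Or.inr ⟨by omega, rfl⟩)))

theorem boundaryPattern_apply (ht : t < 2 * n) (a : Fin n) :
    boundaryPattern n t a =
      if t ≤ n - 2 then (if a.val ≤ n - 2 - t then n - a.val else a.val + t + 2 - n)
      else if t = n - 1 then a.val + 1
      else if t ≤ 2 * n - 3 then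
        (if a.val < 2 * n - 2 - t then a.val + 1 else if a.val = 2 * n - 2 - t then n
          else if a.val = 2 * n - 1 - t then 2 * n - 1 - t else 3 * n - 1 - t - a.val)
      else if t = 2 * n - 2 then
        (if a.val = 0 then n else if a.val = 1 then 1 else n + 1 - a.val)
      else (if a.val = 0 then 1 else n + 1 - a.val) := by
  have := a.isLt
  rcases boundaryPattern_cases ht with ⟨_, e⟩ | ⟨_, e⟩ | ⟨_, _, e⟩ | ⟨_, e⟩ | ⟨_, e⟩ <;>
    rw [e] <;> simp only [wordA, wordId, wordB, wordC1, wordC2] <;> split_ifs <;> omega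

theorem boundaryPattern_injective (ht : t < 2 * n) :
    Function.Injective (boundaryPattern n t) := by
  intro a b hab
  rw [boundaryPattern_apply ht, boundaryPattern_apply ht] at hab
  have := a.isLt; have := b.isLt
  ext
  split_ifs at hab <;> omega

theorem boundaryPattern_mem_Icc (ht : t < 2 * n) (a : Fin n) :
    boundaryPattern n t a ∈ Finset.Icc 1 n := by
  have := a.isLt
  rw [Finset.mem_Icc, boundaryPattern_apply ht]
  split_ifs <;> omega

theorem boundaryPattern_inj (hn : 4 ≤ n) {t' : ℕ} (ht : t < 2 * n) (ht' : t' < 2 * n) :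
    boundaryPattern n t = boundaryPattern n t' ↔ t = t' := by
  refine ⟨fun h => ?_, congrArg _⟩
  -- the letters at positions `0, 1, 2, n - 1, n - 2` already tell the `2 * n` patterns apart
  have h0 := congrFun h ⟨0, by omega⟩
  have h1 := congrFun h ⟨1, by omega⟩
  have h2 := congrFun h ⟨2, by omega⟩
  have h3 := congrFun h ⟨n - 1, by omega⟩
  have h4 := congrFun h ⟨n - 2, by omega⟩
  rcases boundaryPattern_cases ht with ⟨_, e⟩ | ⟨_, e⟩ | ⟨_, _, e⟩ | ⟨_, e⟩ | ⟨_, e⟩ <;>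
  rcases boundaryPattern_cases ht' with ⟨_, e'⟩ | ⟨_, e'⟩ | ⟨_, _, e'⟩ | ⟨_, e'⟩ | ⟨_, e'⟩ <;>
    try omega
  all_goals
    rw [e, e'] at h0 h1 h2 h3 h4
    simp only [wordA, wordId, wordB, wordC1, wordC2, zero_le, OfNat.ofNat_ne_zero,
      OfNat.ofNat_ne_one, if_true, if_false] at h0 h1 h2 h3 h4
    (try split_ifs at h0) <;> (try omega) <;> (try split_ifs at h3) <;> (try omega) <;>
      (try split_ifs at h1) <;> (try omega) <;> (try split_ifs at h2) <;> (try omega) <;>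
      (try split_ifs at h4) <;> omega

theorem boundaryPattern_mem_Pset (hn : 2 ≤ n) (ht : t < 2 * n) : boundaryPattern n t ∈ Pset n := by
  rcases boundaryPattern_cases ht with ⟨_, e⟩ | ⟨_, e⟩ | ⟨_, _, e⟩ | ⟨_, e⟩ | ⟨_, e⟩ <;> rw [e]
  · exact Or.inl ⟨t + 2, by omega, by omega, rfl⟩
  · exact Or.inr (Or.inl rfl)
  · exact Or.inr (Or.inr (Or.inl ⟨2 * n - 2 - t, by omega, by omega, rfl⟩))
  · exact Or.inr (Or.inr (Or.inr (Or.inl rfl)))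
  · exact Or.inr (Or.inr (Or.inr (Or.inr rfl)))

theorem exists_boundaryPattern_eq (hn : 2 ≤ n) {p : Fin n → ℕ} (hp : p ∈ Pset n) :
    ∃ t < 2 * n, boundaryPattern n t = p := by
  rcases hp with ⟨κ, hκ, hκn, rfl⟩ | rfl | ⟨κ, hκ, hκn, rfl⟩ | rfl | rfl
  · obtain rfl | hκ := eq_or_lt_of_le hκ
    · exact ⟨0, by omega, by rw [boundaryPattern, if_pos (Nat.zero_le _), wordA_one]⟩
    · refine ⟨κ - 2, by omega, ?_⟩
      rw [boundaryPattern, if_pos (by omega), Nat.sub_add_cancel hκ]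
  · exact ⟨n - 1, by omega, by rw [boundaryPattern, if_neg (by omega), if_pos rfl]⟩
  · refine ⟨2 * n - 2 - κ, by omega, ?_⟩
    rw [boundaryPattern, if_neg (by omega), if_neg (by omega), if_pos (by omega)]
    congr 1
    omega
  · refine ⟨2 * n - 2, by omega, ?_⟩
    rw [boundaryPattern, if_neg (by omega), if_neg (by omega), if_neg (by omega), if_pos rfl]
  · refine ⟨2 * n - 1, by omega, ?_⟩
    rw [boundaryPattern, if_neg (by omega), if_neg (by omega), if_neg (by omega),
      if_neg (by omega)]

/-- `y` stands for the glued word read from position `k - (n - 1)`. The two decreasing runs are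
never compared: they lie more than `n` letters apart. -/
theorem ordIso_boundaryPattern (hn : 2 ≤ n) (y : ℕ → ℕ)
    (htail : ∀ u v, u < v → v < n - 1 → y v < y u)
    (htail_gt : ∀ u, u < n - 1 → n < y u)
    (hmid : ∀ u, n - 1 ≤ u → u < 2 * n - 2 → y u = u + 2 - n)
    (hend : y (2 * n - 1) = n)
    (hhead : ∀ u v, 2 * n ≤ u → u < v → v < 3 * n - 1 → y v < y u)
    (hhead_gt : ∀ u, 2 * n ≤ u → u < 3 * n - 1 → n < y u)
    (hhead_lt : ∀ u, 2 * n ≤ u → u < 3 * n - 1 → y u < y (2 * n - 2))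
    (ht : t < 2 * n) : OrdIso (fun a : Fin n => y (t + a)) (boundaryPattern n t) := by
  have htop_gt : n < y (2 * n - 2) :=
    (hhead_gt (2 * n) le_rfl (by omega)).trans (hhead_lt (2 * n) le_rfl (by omega))
  have region : ∀ u, u < 3 * n - 1 →
      (u < n - 1 ∧ n < y u) ∨ (n - 1 ≤ u ∧ u < 2 * n - 2 ∧ y u = u + 2 - n) ∨
      (u = 2 * n - 2 ∧ y u = y (2 * n - 2)) ∨ (u = 2 * n - 1 ∧ y u = n) ∨
      (2 * n ≤ u ∧ n < y u ∧ y u < y (2 * n - 2)) := by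
    intro u hu
    by_cases h₁ : u < n - 1
    · exact Or.inl ⟨h₁, htail_gt u h₁⟩
    by_cases h₂ : u < 2 * n - 2
    · exact Or.inr (Or.inl ⟨by omega, h₂, hmid u (by omega) h₂⟩)
    by_cases h₃ : u = 2 * n - 2
    · exact Or.inr (Or.inr (Or.inl ⟨h₃, h₃ ▸ rfl⟩))
    by_cases h₄ : u = 2 * n - 1
    · exact Or.inr (Or.inr (Or.inr (Or.inl ⟨h₄, h₄ ▸ hend⟩)))
    exact Or.inr (Or.inr (Or.inr (Or.inr
      ⟨by omega, hhead_gt u (by omega) hu, hhead_lt u (by omega) hu⟩)))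
  refine OrdIso.of_lt_imp (boundaryPattern_injective ht) fun a b hab => ?_
  have ha := a.isLt; have hb := b.isLt
  have := htail (t + a) (t + b); have := htail (t + b) (t + a)
  have := hhead (t + a) (t + b); have := hhead (t + b) (t + a)
  have ra := region (t + a) (by omega)
  have rb := region (t + b) (by omega)
  rw [boundaryPattern_apply ht, boundaryPattern_apply ht] at hab
  split_ifs at hab <;> omega

end boundaryPattern

theorem fin_mk_mod_of_lt {m x : ℕ} (h : x % m < m) (hx : x < m) :
    (⟨x % m, h⟩ : Fin m) = ⟨x, hx⟩ :=
  Fin.ext (Nat.mod_eq_of_lt hx)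

theorem fin_mk_mod_of_le {m x : ℕ} (h : x % m < m) (hx : m ≤ x) (hx' : x - m < m) :
    (⟨x % m, h⟩ : Fin m) = ⟨x - m, hx'⟩ :=
  Fin.ext (by rw [Fin.val_mk, Nat.mod_eq_sub_mod hx, Nat.mod_eq_of_lt hx'])

def gluedWord (n k : ℕ) (w : Fin k → ℕ) : Fin (k + n + 1) → ℕ := fun p =>
  if h : p.val < k then w ⟨p, h⟩ + (n + 1)
  else if p.val < k + n - 1 then p.val + 1 - k
  else if p.val = k + n - 1 then Finset.univ.sup w + (n + 2)
  else n

def boundaryWord (n k : ℕ) (w : Fin k → ℕ) (u : ℕ) : ℕ :=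
  gluedWord n k w ⟨(k - (n - 1) + u) % (k + n + 1), Nat.mod_lt _ (Nat.succ_pos _)⟩

section gluedWord

variable {n k t u : ℕ} {w : Fin k → ℕ}

theorem gluedWord_of_lt (p : Fin (k + n + 1)) (hp : p.val < k) :
    gluedWord n k w p = w ⟨p, hp⟩ + (n + 1) := dif_pos hp

theorem cwin_gluedWord_of_add_le (j : Fin (k + n + 1)) (hj : j.val + n ≤ k) :
    OrdIso (cwin (gluedWord n k w) j n) (winAt w j n hj) := by
  have hval : ∀ a : Fin n, cwin (gluedWord n k w) j n a = winAt w j n hj a + (n + 1) := by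
    intro a
    have ha := a.isLt
    rw [cwin, fin_mk_mod_of_lt _ (by omega), gluedWord_of_lt _ (show j.val + a.val < k by omega)]
    rfl
  intro a b
  rw [hval, hval, Nat.add_lt_add_iff_right]

theorem boundaryWord_of_lt (hk : n - 1 ≤ k) (hu : u < n - 1) :
    boundaryWord n k w u = w ⟨k - (n - 1) + u, by omega⟩ + (n + 1) := by
  rw [boundaryWord, fin_mk_mod_of_lt _ (by omega), gluedWord_of_lt]

theorem boundaryWord_of_le_of_lt (hk : n - 1 ≤ k) (hu : n - 1 ≤ u) (hu' : u < 2 * n - 2) :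
    boundaryWord n k w u = u + 2 - n := by
  rw [boundaryWord, fin_mk_mod_of_lt _ (by omega), gluedWord, dif_neg (by simp only; omega),
    if_pos (by simp only; omega)]
  simp only
  omega

theorem boundaryWord_two_mul_sub_two (hn : 1 ≤ n) (hk : n - 1 ≤ k) :
    boundaryWord n k w (2 * n - 2) = Finset.univ.sup w + (n + 2) := by
  rw [boundaryWord, fin_mk_mod_of_lt _ (by omega), gluedWord, dif_neg (by simp only; omega),
    if_neg (by simp only; omega), if_pos (by simp only; omega)]

theorem boundaryWord_two_mul_sub_one (hn : 1 ≤ n) (hk : n - 1 ≤ k) :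
    boundaryWord n k w (2 * n - 1) = n := by
  rw [boundaryWord, fin_mk_mod_of_lt _ (by omega), gluedWord, dif_neg (by simp only; omega),
    if_neg (by simp only; omega), if_neg (by simp only; omega)]

theorem boundaryWord_of_two_mul_le (hk : n - 1 ≤ k) (hu : 2 * n ≤ u) (hu' : u < 3 * n - 1) :
    boundaryWord n k w u = w ⟨u - 2 * n, by omega⟩ + (n + 1) := by
  rw [boundaryWord, fin_mk_mod_of_le _ (by omega) (by omega),
    gluedWord_of_lt _ (by simp only; omega)]
  congr 2
  simp only [Fin.mk.injEq]
  omega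

theorem cwin_gluedWord_boundary (hn : 2 ≤ n) (hk : n - 1 ≤ k)
    (hfirst : ∀ a b : Fin k, a < b → b.val < n - 1 → w b < w a)
    (hlast : ∀ a b : Fin k, a < b → k - (n - 1) ≤ a.val → w b < w a)
    (ht : t < 2 * n) :
    OrdIso (cwin (gluedWord n k w) ⟨k - (n - 1) + t, by omega⟩ n) (boundaryPattern n t) := by
  have hcwin : cwin (gluedWord n k w) ⟨k - (n - 1) + t, by omega⟩ n =
      fun a : Fin n => boundaryWord n k w (t + a) := by
    funext a
    simp only [cwin, boundaryWord, Nat.add_assoc]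
  rw [hcwin]
  refine ordIso_boundaryPattern hn _ (fun u v huv hv => ?_) (fun u hu => ?_)
    (fun u hu hu' => boundaryWord_of_le_of_lt hk hu hu')
    (boundaryWord_two_mul_sub_one (by omega) hk)
    (fun u v hu huv hv => ?_) (fun u hu hu' => ?_) (fun u hu hu' => ?_) ht
  · rw [boundaryWord_of_lt hk hv, boundaryWord_of_lt hk (huv.trans hv)]
    exact Nat.add_lt_add_right (hlast _ _ (Fin.mk_lt_mk.2 (by omega)) (Nat.le_add_right _ _)) _
  · rw [boundaryWord_of_lt hk hu]
    omega
  · rw [boundaryWord_of_two_mul_le hk (hu.trans huv.le) hv,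
      boundaryWord_of_two_mul_le hk hu (huv.trans hv)]
    exact Nat.add_lt_add_right (hfirst _ _ (Fin.mk_lt_mk.2 (by omega)) (by simp only; omega)) _
  · rw [boundaryWord_of_two_mul_le hk hu hu']
    omega
  · rw [boundaryWord_of_two_mul_le hk hu hu', boundaryWord_two_mul_sub_two (by omega) hk]
    have := Finset.le_sup (f := w) (Finset.mem_univ ⟨u - 2 * n, by omega⟩)
    omega

end gluedWord

theorem add_le_or_exists_eq_sub_add {n k : ℕ} (j : Fin (k + n + 1)) :
    j.val + n ≤ k ∨ ∃ t < 2 * n, j.val = k - (n - 1) + t := by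
  by_cases h : j.val + n ≤ k
  · exact Or.inl h
  · exact Or.inr ⟨j.val - (k - (n - 1)), by omega, by omega⟩

section windows

variable {n k : ℕ} {w : Fin k → ℕ}

theorem cwin_gluedWord_cases (hn : 2 ≤ n) (hk : n - 1 ≤ k)
    (hfirst : ∀ a b : Fin k, a < b → b.val < n - 1 → w b < w a)
    (hlast : ∀ a b : Fin k, a < b → k - (n - 1) ≤ a.val → w b < w a)
    {π : Equiv.Perm (Fin n)} {j : Fin (k + n + 1)}
    (hj : OrdIso (cwin (gluedWord n k w) j n) (permWord π)) :
    (∃ h : j.val + n ≤ k, OrdIso (winAt w j n h) (permWord π)) ∨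
      ∃ t < 2 * n, j.val = k - (n - 1) + t ∧ boundaryPattern n t = permWord π := by
  rcases add_le_or_exists_eq_sub_add j with h | ⟨t, ht, hjt⟩
  · exact Or.inl ⟨h, (cwin_gluedWord_of_add_le j h).symm.trans hj⟩
  · rw [show j = ⟨k - (n - 1) + t, by omega⟩ from Fin.ext hjt] at hj
    have hpat := (cwin_gluedWord_boundary hn hk hfirst hlast ht).symm.trans hj
    exact Or.inr ⟨t, ht, hjt, hpat.eq (boundaryPattern_injective ht) (permWord_injective π)
      (boundaryPattern_mem_Icc ht) (permWord_mem_Icc π)⟩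

theorem eq_of_ordIso_cwin_gluedWord (hn : 4 ≤ n) (hk : n - 1 ≤ k)
    (hatmost : ∀ π : Equiv.Perm (Fin n), ∀ i₁ i₂ : ℕ, (h₁ : i₁ + n ≤ k) →
      (h₂ : i₂ + n ≤ k) → OrdIso (winAt w i₁ n h₁) (permWord π) →
      OrdIso (winAt w i₂ n h₂) (permWord π) → i₁ = i₂)
    (hfirst : ∀ a b : Fin k, a < b → b.val < n - 1 → w b < w a)
    (hlast : ∀ a b : Fin k, a < b → k - (n - 1) ≤ a.val → w b < w a)
    (hP : ∀ i : ℕ, (h : i + n ≤ k) → ∀ p ∈ Pset n, ¬ OrdIso (winAt w i n h) p)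
    {π : Equiv.Perm (Fin n)} {j₁ j₂ : Fin (k + n + 1)}
    (h₁ : OrdIso (cwin (gluedWord n k w) j₁ n) (permWord π))
    (h₂ : OrdIso (cwin (gluedWord n k w) j₂ n) (permWord π)) : j₁ = j₂ := by
  rcases cwin_gluedWord_cases (by omega) hk hfirst hlast h₁ with
    ⟨hi₁, hw₁⟩ | ⟨t₁, ht₁, hj₁, hp₁⟩ <;>
  rcases cwin_gluedWord_cases (by omega) hk hfirst hlast h₂ with
    ⟨hi₂, hw₂⟩ | ⟨t₂, ht₂, hj₂, hp₂⟩
  · exact Fin.ext (hatmost π _ _ hi₁ hi₂ hw₁ hw₂)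
  · exact absurd hw₁ (hP _ hi₁ _ (hp₂ ▸ boundaryPattern_mem_Pset (by omega) ht₂))
  · exact absurd hw₂ (hP _ hi₂ _ (hp₁ ▸ boundaryPattern_mem_Pset (by omega) ht₁))
  · have := (boundaryPattern_inj hn ht₁ ht₂).1 (hp₁.trans hp₂.symm)
    exact Fin.ext (by omega)

end windows

/-- Lemma 5 (with 𝒫' = 𝒫): if `w` covers every permutation of `[n]` at most once, its
first `n-1` and last `n-1` letters are strictly decreasing, and no window of `w` is
order-isomorphic to a permutation of 𝒫, then there is a cyclic word `z` of length
`k + n + 1` covering every permutation covered by `w` and every permutation of 𝒫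
exactly once. -/
theorem glue_lemma (n k : ℕ) (hn : 4 ≤ n) (hk : n - 1 ≤ k) (w : Fin k → ℕ)
    (hatmost : ∀ π : Equiv.Perm (Fin n), ∀ i₁ i₂ : ℕ, (h₁ : i₁ + n ≤ k) →
      (h₂ : i₂ + n ≤ k) → OrdIso (winAt w i₁ n h₁) (permWord π) →
      OrdIso (winAt w i₂ n h₂) (permWord π) → i₁ = i₂)
    (hdec1 : ∀ a b : ℕ, (hab : a < b) → (hb : b < n - 1) →
      w ⟨b, by omega⟩ < w ⟨a, by omega⟩)
    (hdec2 : ∀ a b : ℕ, (hab : a < b) → (hb : b < n - 1) →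
      w ⟨k - (n - 1) + b, by omega⟩ < w ⟨k - (n - 1) + a, by omega⟩)
    (hP : ∀ i : ℕ, (h : i + n ≤ k) → ∀ p ∈ Pset n, ¬ OrdIso (winAt w i n h) p) :
    ∃ z : Fin (k + n + 1) → ℕ, ∀ π : Equiv.Perm (Fin n),
      ((∃ i : ℕ, ∃ h : i + n ≤ k, OrdIso (winAt w i n h) (permWord π)) ∨
        permWord π ∈ Pset n) →
      ∃! j : Fin (k + n + 1), OrdIso (cwin z j n) (permWord π) := by
  have hfirst : ∀ a b : Fin k, a < b → b.val < n - 1 → w b < w a := fun a b => hdec1 a b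
  have hlast : ∀ a b : Fin k, a < b → k - (n - 1) ≤ a.val → w b < w a := by
    intro a b hab ha
    convert hdec2 (a - (k - (n - 1))) (b - (k - (n - 1))) (by omega) (by omega) using 2 <;>
      exact Fin.ext (by simp only; omega)
  refine ⟨gluedWord n k w, fun π hπ => ?_⟩
  obtain ⟨j, hj⟩ : ∃ j, OrdIso (cwin (gluedWord n k w) j n) (permWord π) := by
    rcases hπ with ⟨i, hi, hw⟩ | hmem
    · exact ⟨⟨i, by omega⟩, (cwin_gluedWord_of_add_le ⟨i, by omega⟩ hi).trans hw⟩
    · obtain ⟨t, ht, hpat⟩ := exists_boundaryPattern_eq (by omega) hmem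
      exact ⟨_, hpat ▸ cwin_gluedWord_boundary (by omega) hk hfirst hlast ht⟩
  exact ⟨j, hj, fun j' hj' => eq_of_ordIso_cwin_gluedWord hn hk hatmost hfirst hlast hP hj' hj⟩
end
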